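/- Let f ∈ Θ_{k,n} with big path P_∞, let δ = (k,n) and δ^⊥ = (1, -k/n) (in (vertical, horizontal)-coordinate convention with ⟨δ^⊥, δ⟩ = 0). If α, β ∈ ℤ² satisfy ⟨δ^⊥, α⟩ < 0, ⟨δ^⊥, β⟩ < 0, and neither α nor β lies in F̃'(f) + ℤδ, then α + β ∉ F̃'(f) + ℤδ. -/

import Mathlib

open Finset

/-- `f : ℤ → ℤ` is an `n`-periodic affine permutation. -/
def IsAffinePerm (n : ℕ) (f : ℤ → ℤ) : Prop :=
  Function.Bijective f ∧ ∀ i : ℤ, f (i + (n : ℤ)) = f i + (n : ℤ)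

/-- Boundedness condition `i ≤ f i ≤ i + n`. -/
def IsBoundedFn (n : ℕ) (f : ℤ → ℤ) : Prop :=
  ∀ i : ℤ, i ≤ f i ∧ f i ≤ i + (n : ℤ)

/-- Bounded affine permutation. -/
def IsBAP (n : ℕ) (f : ℤ → ℤ) : Prop := IsAffinePerm n f ∧ IsBoundedFn n f

/-- The orbit of the residue of `a` under the reduction of `f` modulo `n`. -/
def orbitF (n : ℕ) (f : ℤ → ℤ) (a : ℤ) : Finset ℤ :=
  (Finset.range n).image (fun r => (f^[r] a) % (n : ℤ))

/-- The reduction of `f` modulo `n` is an `n`-cycle. -/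
def IsCycleMod (n : ℕ) (f : ℤ → ℤ) : Prop :=
  ∀ j : ℤ, ∃ r : ℕ, r < n ∧ (f^[r] 0) % (n : ℤ) = j % (n : ℤ)

/-- The winding number `k(f̄) = #{i ∈ [1,n] : f̄(i) < i} = #{i ∈ [1,n] : f(i) > n}`. -/
noncomputable def winding (n : ℕ) (f : ℤ → ℤ) : ℕ :=
  ((Finset.Icc (1 : ℤ) (n : ℤ)).filter (fun i => (n : ℤ) < f i)).card

/-- `f ∈ Θ_{k,n}`: a bounded affine permutation whose reduction modulo `n`
is an `n`-cycle with winding number `k`. -/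
def IsTheta (k n : ℕ) (f : ℤ → ℤ) : Prop :=
  IsBAP n f ∧ IsCycleMod n f ∧ winding n f = k

/-- Inversions of `f`: pairs `i < j` with `f(i) > f(j)` and `i ∈ [n]`
(for a bounded affine permutation all inversions lie in the indicated box). -/
noncomputable def inversions (n : ℕ) (f : ℤ → ℤ) : Finset (ℤ × ℤ) :=
  ((Finset.Icc (1 : ℤ) (n : ℤ)) ×ˢ (Finset.Icc (1 : ℤ) (3 * (n : ℤ)))).filter
    (fun p => p.1 < p.2 ∧ f p.2 < f p.1)

/-- The length `ℓ(f)`, i.e. the number of inversions. -/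
noncomputable def alen (n : ℕ) (f : ℤ → ℤ) : ℕ := (inversions n f).card

/-- The number of cycles of the reduction of `f` modulo `n`. -/
def numCycles (n : ℕ) (f : ℤ → ℤ) : ℕ :=
  ((Finset.range n).image (fun a : ℕ => orbitF n f (a : ℤ))).card

/-- The affine simple transposition `s_i`, swapping `i + rn` and `i + 1 + rn` for all `r`. -/
def sT (n : ℕ) (i : ℤ) (j : ℤ) : ℤ :=
  if j % (n : ℤ) = i % (n : ℤ) then j + 1
  else if j % (n : ℤ) = (i + 1) % (n : ℤ) then j - 1
  else j

/-- `s_i f`. -/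
def mulS (n : ℕ) (i : ℤ) (f : ℤ → ℤ) : ℤ → ℤ := fun m => sT n i (f m)

/-- `f s_i`. -/
def smulS (n : ℕ) (i : ℤ) (f : ℤ → ℤ) : ℤ → ℤ := fun m => f (sT n i m)

/-- `s_i f s_i`. -/
def conjS (n : ℕ) (i : ℤ) (f : ℤ → ℤ) : ℤ → ℤ := fun m => sT n i (f (sT n i m))

/-- The cyclic shift `σ`. -/
def cshift (f : ℤ → ℤ) : ℤ → ℤ := fun i => f (i - 1) + 1

/-- Resolving the crossing `(i,j)`: swap the values `f(i)` and `f(j)` `n`-periodically. -/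
def resolve (n : ℕ) (f : ℤ → ℤ) (i j : ℤ) : ℤ → ℤ := fun m =>
  if m % (n : ℤ) = i % (n : ℤ) then f j + (m - i)
  else if m % (n : ℤ) = j % (n : ℤ) then f i + (m - j)
  else f m

/-- `g'` is the order-preserving relabeling (by `ℤ`, `n'`-periodically) of the
restriction of `g` to the set `S` of integers. -/
def IsRelabelOn (n : ℕ) (g : ℤ → ℤ) (S : Set ℤ) (n' : ℕ) (g' : ℤ → ℤ) : Prop :=
  ∃ φ : ℤ → ℤ, StrictMono φ ∧ (∀ m : ℤ, φ (m + (n' : ℤ)) = φ m + (n : ℤ)) ∧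
    Set.range φ = S ∧ ∀ m : ℤ, g (φ m) = φ (g' m)

/-- The parameters `(k₁, n₁)` of the cycle of `g` through `a`:
`n₁` is the size of the orbit of the residue of `a`, and `k₁` is the winding number of the
permutation obtained by order-preserving relabeling of the restriction of `g`
to the integers whose residue lies in that orbit. -/
noncomputable def resParamsAt (n : ℕ) (g : ℤ → ℤ) (a : ℤ) : ℕ × ℕ :=
  (sInf {k₁ : ℕ | ∃ g₁ : ℤ → ℤ,
      IsRelabelOn n g {m : ℤ | m % (n : ℤ) ∈ orbitF n g a} (orbitF n g a).card g₁ ∧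
      winding (orbitF n g a).card g₁ = k₁},
   (orbitF n g a).card)

/-- The inversion multiset `F'(f)`: one point `(k₁, n₁)` for each inversion `(i,j)`,
recording the parameters of the cycle through `i` after resolving the crossing. -/
noncomputable def invMultiset (n : ℕ) (f : ℤ → ℤ) : Multiset (ℕ × ℕ) :=
  Multiset.map (fun p => resParamsAt n (resolve n f p.1 p.2) p.1) (inversions n f).val

/-- The inversion multiset `F(f)` in `(k, n-k)`-coordinates: points `(k₁, n₁ - k₁)`. -/
noncomputable def invMultisetF (n : ℕ) (f : ℤ → ℤ) : Multiset (ℕ × ℕ) :=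
  Multiset.map (fun p => (p.1, p.2 - p.1)) (invMultiset n f)

/-- `f` is repetition-free if its inversion multiset has no repeated elements. -/
def RepFree (n : ℕ) (f : ℤ → ℤ) : Prop := (invMultiset n f).Nodup

/-- A double crossing at `i`: with `a = f⁻¹(i+1)`, `b = f⁻¹(i)`, `c = f(i+1)`, `d = f(i)`,
we have `a < b < i < i+1 < c < d`. -/
def DoubleCrossingAt (n : ℕ) (f : ℤ → ℤ) (i : ℤ) : Prop :=
  ∃ a b : ℤ, f a = i + 1 ∧ f b = i ∧ a < b ∧ b < i ∧ i + 1 < f (i + 1) ∧ f (i + 1) < f i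

/-- `i` and `j` lie in the same cycle of the reduction of `f` modulo `n`. -/
def SameCycleMod (n : ℕ) (f : ℤ → ℤ) (i j : ℤ) : Prop :=
  j % (n : ℤ) ∈ orbitF n f i

/-- The recurrence defining the positroid Catalan numbers `C_f`. -/
structure CatalanRules (C : (n : ℕ) → (ℤ → ℤ) → ℕ) : Prop where
  base : ∀ f : ℤ → ℤ, IsBAP 1 f → C 1 f = 1
  fix_removal : ∀ (n n' : ℕ) (f f' : ℤ → ℤ), IsBAP n f → IsBAP n' f' →
    IsRelabelOn n f {m : ℤ | f m ≠ m ∧ f m ≠ m + (n : ℤ)} n' f' → C n f = C n' f'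
  mul_left : ∀ (n : ℕ) (f : ℤ → ℤ) (i : ℤ), 2 ≤ n → IsBAP n f →
    (f i = i + 1 ∨ f (i + 1) = i + (n : ℤ)) → C n f = C n (mulS n i f)
  mul_right : ∀ (n : ℕ) (f : ℤ → ℤ) (i : ℤ), 2 ≤ n → IsBAP n f →
    (f i = i + 1 ∨ f (i + 1) = i + (n : ℤ)) → C n f = C n (smulS n i f)
  conj_inv : ∀ (n : ℕ) (f : ℤ → ℤ) (i : ℤ), IsBAP n f → IsBAP n (conjS n i f) →
    alen n (conjS n i f) = alen n f → C n (conjS n i f) = C n f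
  double_same : ∀ (n : ℕ) (f : ℤ → ℤ) (i : ℤ), IsBAP n f → DoubleCrossingAt n f i →
    SameCycleMod n f i (i + 1) → C n (conjS n i f) = C n (mulS n i f) + C n f
  double_diff : ∀ (n : ℕ) (f : ℤ → ℤ) (i : ℤ), IsBAP n f → DoubleCrossingAt n f i →
    ¬ SameCycleMod n f i (i + 1) → C n (conjS n i f) = C n f

/-- The value `f^r(0)` for `r ∈ ℤ` (using `f^n(0) = kn` to extend periodically). -/
def bigPt (n k : ℕ) (f : ℤ → ℤ) (r : ℤ) : ℤ :=
  f^[(r % (n : ℤ)).toNat] 0 + (r / (n : ℤ)) * ((k : ℤ) * (n : ℤ))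

/-- The big path `P_∞` of `f`: the piecewise-linear path through the points
`(r, f^r(0)/n)` for `r ∈ ℤ` (horizontal coordinate `r`, vertical `f^r(0)/n`). -/
def bigPath (n k : ℕ) (f : ℤ → ℤ) : Set (ℝ × ℝ) :=
  ⋃ r : ℤ, segment ℝ ((r : ℝ), (bigPt n k f r : ℝ) / (n : ℝ))
    ((r : ℝ) + 1, (bigPt n k f (r + 1) : ℝ) / (n : ℝ))

/-- The small path `P^{(f)}`: the piecewise-linear path through the points
`(r, f^r(0)/n)` for `r = 0, 1, …, n`. -/
def smallPath (n : ℕ) (f : ℤ → ℤ) : Set (ℝ × ℝ) :=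
  ⋃ r ∈ Finset.range n, segment ℝ ((r : ℝ), ((f^[r] 0 : ℤ) : ℝ) / (n : ℝ))
    ((r : ℝ) + 1, ((f^[r + 1] 0 : ℤ) : ℝ) / (n : ℝ))

/-- The number of up steps among the first `t` steps of `s`. -/
def upsTo (n : ℕ) (s : Fin n → Bool) (t : ℕ) : ℕ :=
  (Finset.univ.filter (fun r : Fin n => r.val < t ∧ s r = true)).card

/-- The number of lattice paths from `(0,0)` to `(k, n-k)` with unit up and right steps
(`n` steps in total, recorded by `s : Fin n → Bool`, `true` = up) which stay above the
main diagonal of the `k × (n-k)` rectangle and avoid every point of `F`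
(points recorded as `(height, horizontal position)`). -/
noncomputable def dyckCount (k n : ℕ) (F : Multiset (ℕ × ℕ)) : ℕ :=
  Nat.card {s : Fin n → Bool //
    upsTo n s n = k ∧
    (∀ t ≤ n, k * (t - upsTo n s t) ≤ (n - k) * upsTo n s t) ∧
    (∀ t ≤ n, (upsTo n s t, t - upsTo n s t) ∉ F)}

/-- `α ∈ F̃'(f) + ℤ·(k,n)`, where `F̃'(f) = F'(f) ∪ {(0,0), (k,n)}`
(points written as `(vertical, horizontal)` pairs). -/
def InFtPlus (k n : ℕ) (f : ℤ → ℤ) (α : ℤ × ℤ) : Prop :=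
  ∃ t : ℤ, (α.1 - t * (k : ℤ), α.2 - t * (n : ℤ)) = ((0 : ℤ), (0 : ℤ)) ∨
    ∃ p ∈ invMultiset n f, ((p.1 : ℤ), (p.2 : ℤ)) = (α.1 - t * (k : ℤ), α.2 - t * (n : ℤ))

/-!
Put `u r = bigPt n k f r`, so that `u (r + 1) = f (u r)`, `u (r + n) = u r + k n`, and `P_∞`
passes through the points `(r, u r / n)`. For `α = (a, b)` with `a n < k b` the translate
`P_∞ + α` lies below `P_∞` on average, and `α ∈ F̃'(f) + ℤδ` exactly when it fails to lie
strictly below at some integer `r`, i.e. `u r ≤ u (r - b) + a n`: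

* a point `(K, B)` of `F'(f)` comes from an inversion `i < j`, `f j < f i`; resolving it closes
  up the orbit of `j` after `B` steps at `f^[B] j = i + K n`, and `i < j` gives
  `u (ρ + B) < u ρ + K n` for `u ρ ≡ j`;
* conversely, where `P_∞ + α` first crosses `P_∞`, the points `i = u r ≤ j = u (r - b) + a n`
  form an inversion with `f^[b] j = i + a n`, so resolving it has parameters `(a, b)`.

Lying strictly below is additive in `α`, which proves the theorem.
-/

open Function

namespace AffinePerm

lemma eq_of_modEq_of_abs_sub_lt {a b n : ℤ} (h : a ≡ b [ZMOD n]) (hab : |b - a| < n) :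
    a = b := by
  linarith [Int.eq_zero_of_abs_lt_dvd h.dvd hab]

section Periodic

variable {n : ℕ} {g : ℤ → ℤ}

lemma map_add_mul {p q : ℤ} (hper : ∀ m, g (m + p) = g m + q) (x c : ℤ) :
    g (x + c * p) = g x + c * q := by
  simpa using AddConstMapClass.map_add_zsmul (⟨g, hper⟩ : AddConstMap ℤ ℤ p q) x c

lemma iterate_add_mul (hper : ∀ m, g (m + n) = g m + n) (r : ℕ) (x c : ℤ) :
    g^[r] (x + c * n) = g^[r] x + c * n := by
  simpa [AddConstMap.pow_apply] using
    AddConstMapClass.map_add_zsmul ((⟨g, hper⟩ : AddConstMap ℤ ℤ (n : ℤ) n) ^ r) x c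

lemma map_modEq_of_modEq {p q : ℤ} (hper : ∀ m, g (m + p) = g m + q) {x y : ℤ}
    (h : x ≡ y [ZMOD p]) : g x ≡ g y [ZMOD q] := by
  obtain ⟨c, rfl⟩ := Int.modEq_iff_add_fac.1 h
  rw [mul_comm, map_add_mul hper]
  exact (Int.add_mul_emod_self_right _ _ _).symm

lemma iterate_modEq (hper : ∀ m, g (m + n) = g m + n) {x y : ℤ} (h : x ≡ y [ZMOD n])
    (r : ℕ) : g^[r] x ≡ g^[r] y [ZMOD n] :=
  map_modEq_of_modEq (fun m => by simpa using iterate_add_mul hper r m 1) h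

lemma modEq_of_map_modEq (hper : ∀ m, g (m + n) = g m + n) (hinj : Injective g) {x y : ℤ}
    (h : g x ≡ g y [ZMOD n]) : x ≡ y [ZMOD n] := by
  obtain ⟨c, hc⟩ := Int.modEq_iff_add_fac.1 h
  rw [mul_comm, ← map_add_mul hper] at hc
  rw [hinj hc]
  exact (Int.add_mul_emod_self_right _ _ _).symm

lemma modEq_of_iterate_modEq (hper : ∀ m, g (m + n) = g m + n) (hinj : Injective g)
    {x y : ℤ} (r : ℕ) (h : g^[r] x ≡ g^[r] y [ZMOD n]) : x ≡ y [ZMOD n] := by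
  induction r with
  | zero => exact h
  | succ r ih =>
    rw [iterate_succ_apply', iterate_succ_apply'] at h
    exact ih (modEq_of_map_modEq hper hinj h)

lemma iterate_modEq_iterate_mod (hper : ∀ m, g (m + n) = g m + n) {B : ℕ} {x : ℤ}
    (hret : g^[B] x ≡ x [ZMOD n]) (r : ℕ) : g^[r] x ≡ g^[r % B] x [ZMOD n] := by
  have hret' : ∀ q : ℕ, g^[B * q] x ≡ x [ZMOD n] := by
    intro q
    induction q with
    | zero => rfl
    | succ q ih =>
      rw [Nat.mul_succ, iterate_add_apply]
      exact (iterate_modEq hper hret _).trans ih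
  conv_lhs => rw [← Nat.mod_add_div r B, iterate_add_apply]
  exact iterate_modEq hper (hret' _) _

lemma injOn_iterate_emod (hper : ∀ m, g (m + n) = g m + n) (hinj : Injective g) {B : ℕ}
    {x : ℤ} (hmin : ∀ s, 0 < s → s < B → ¬ g^[s] x ≡ x [ZMOD n]) :
    Set.InjOn (fun s => g^[s] x % n) (range B) := by
  suffices key : ∀ s t, s < t → t < B → ¬ g^[s] x ≡ g^[t] x [ZMOD n] by
    intro s hs t ht h
    simp only [coe_range, Set.mem_Iio] at hs ht
    rcases lt_trichotomy s t with hst | rfl | hst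
    · exact absurd h (key s t hst ht)
    · rfl
    · exact absurd h.symm (key t s hst hs)
  intro s t hst htB h
  rw [show t = s + (t - s) by omega, iterate_add_apply] at h
  exact hmin (t - s) (by omega) (by omega) (modEq_of_iterate_modEq hper hinj s h).symm

lemma orbitF_eq_image_range (hper : ∀ m, g (m + n) = g m + n) {B : ℕ} {x : ℤ} (hB : 0 < B)
    (hBn : B ≤ n) (hret : g^[B] x ≡ x [ZMOD n]) :
    orbitF n g x = (range B).image (fun s => g^[s] x % n) := by
  apply Subset.antisymm
  · intro y hy
    obtain ⟨r, -, rfl⟩ := mem_image.1 hy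
    exact mem_image.2 ⟨r % B, mem_range.2 (Nat.mod_lt r hB),
      (iterate_modEq_iterate_mod hper hret r).symm⟩
  · exact image_subset_image (range_subset_range.2 hBn)

lemma map_emod_mem_orbitF (hper : ∀ m, g (m + n) = g m + n) {B : ℕ} {x y : ℤ} (hB : 0 < B)
    (hBn : B ≤ n) (hret : g^[B] x ≡ x [ZMOD n]) (hy : y % n ∈ orbitF n g x) :
    g y % n ∈ orbitF n g x := by
  obtain ⟨r, -, hr⟩ := mem_image.1 hy
  rw [orbitF_eq_image_range hper hB hBn hret]
  refine mem_image.2 ⟨(r + 1) % B, mem_range.2 (Nat.mod_lt _ hB), ?_⟩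
  have hgy : g y ≡ g^[r + 1] x [ZMOD n] := by
    rw [iterate_succ_apply']
    exact iterate_modEq hper (show y ≡ g^[r] x [ZMOD n] from hr.symm) 1
  exact ((iterate_modEq_iterate_mod hper hret (r + 1)).symm.trans hgy.symm)

end Periodic

section Winding

variable {n : ℕ} {g : ℤ → ℤ}

lemma sum_comp_eq_sum_Ico {ι : Type*} {e : ℤ → ℤ} (he : ∀ m, e (m + n) = e m)
    {s : Finset ι} {v : ι → ℤ} (hv : Set.InjOn (fun a => v a % n) s) (hcard : #s = n) :
    ∑ a ∈ s, e (v a) = ∑ m ∈ Ico (0 : ℤ) n, e m := by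
  rcases Nat.eq_zero_or_pos n with rfl | hn
  · simp [card_eq_zero.1 hcard]
  have hmaps : Set.MapsTo (fun a => v a % n) s (Ico (0 : ℤ) n) := fun a _ =>
    mem_Ico.2 ⟨Int.emod_nonneg _ (by positivity), Int.emod_lt_of_pos _ (by positivity)⟩
  refine sum_nbij (fun a => v a % n) hmaps hv
    (surjOn_of_injOn_of_card_le _ hmaps hv (by simp [hcard])) fun a _ => ?_
  have he' : ∀ m, e (m + n) = e m + 0 := by simpa using he
  simpa [Int.emod_add_ediv_mul] using map_add_mul he' (v a % n) (v a / n)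

lemma sum_Icc_sub_eq_winding_mul (hper : ∀ m, g (m + n) = g m + n) (hinj : Injective g)
    (hbdd : IsBoundedFn n g) : ∑ m ∈ Icc (1 : ℤ) n, (g m - m) = winding n g * n := by
  -- `τ m ∈ [1, n]` is the representative of `g m`; it permutes `[1, n]`.
  set τ : ℤ → ℤ := fun m => if (n : ℤ) < g m then g m - n else g m with hτ
  have hτg : ∀ m, τ m ≡ g m [ZMOD n] := fun m => by
    simp only [hτ]; split_ifs
    · exact Int.sub_emod_right _ _
    · rfl
  have hmaps : Set.MapsTo τ (Icc (1 : ℤ) n) (Icc (1 : ℤ) n) := fun m hm => by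
    simp only [coe_Icc, Set.mem_Icc, hτ] at hm ⊢
    have := hbdd m
    split_ifs <;> omega
  have hinjOn : Set.InjOn τ (Icc (1 : ℤ) n) := fun m hm m' hm' h => by
    have hmm' := modEq_of_map_modEq hper hinj (((hτg m).symm.trans (h ▸ rfl)).trans (hτg m'))
    simp only [coe_Icc, Set.mem_Icc] at hm hm'
    exact eq_of_modEq_of_abs_sub_lt hmm' (abs_sub_lt_iff.2 ⟨by omega, by omega⟩)
  have hsumτ : ∑ m ∈ Icc (1 : ℤ) n, τ m = ∑ m ∈ Icc (1 : ℤ) n, m :=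
    sum_nbij τ hmaps hinjOn (surjOn_of_injOn_of_card_le _ hmaps hinjOn le_rfl) fun _ _ => rfl
  calc ∑ m ∈ Icc (1 : ℤ) n, (g m - m)
      = ∑ m ∈ Icc (1 : ℤ) n, ((τ m - m) + if (n : ℤ) < g m then (n : ℤ) else 0) :=
        sum_congr rfl fun m _ => by simp only [hτ]; split_ifs <;> ring
    _ = winding n g * n := by
        rw [sum_add_distrib, sum_sub_distrib, hsumτ, sub_self, zero_add, sum_ite,
          sum_const_zero, add_zero, sum_const, nsmul_eq_mul, winding]

lemma iterate_eq_add_winding_mul (hper : ∀ m, g (m + n) = g m + n) (hinj : Injective g)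
    (hbdd : IsBoundedFn n g) {x : ℤ} (horb : Set.InjOn (fun s => g^[s] x % n) (range n)) :
    g^[n] x = x + winding n g * n := by
  have hdisp : ∀ m, g (m + n) - (m + n) = g m - m := fun m => by rw [hper]; ring
  have hIcc : Set.InjOn (fun m : ℤ => m % n) (Icc (1 : ℤ) n) := fun m hm m' hm' h => by
    simp only [coe_Icc, Set.mem_Icc] at hm hm'
    exact eq_of_modEq_of_abs_sub_lt h (abs_sub_lt_iff.2 ⟨by omega, by omega⟩)
  have htel : g^[n] x - x = ∑ s ∈ range n, (g (g^[s] x) - g^[s] x) := by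
    simpa only [iterate_succ_apply', iterate_zero_apply] using
      (sum_range_sub (fun s => g^[s] x) n).symm
  rw [sum_comp_eq_sum_Ico (e := fun y => g y - y) hdisp horb (card_range n),
    ← sum_comp_eq_sum_Ico (e := fun y => g y - y) (v := fun m => m) hdisp hIcc (by simp),
    sum_Icc_sub_eq_winding_mul hper hinj hbdd] at htel
  linarith

end Winding

section Resolve

def swapRes (n : ℕ) (i j m : ℤ) : ℤ :=
  if m % n = i % n then m + (j - i) else if m % n = j % n then m - (j - i) else m

variable {n : ℕ} {f : ℤ → ℤ} {i j : ℤ}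

lemma swapRes_swapRes (hij : ¬ i ≡ j [ZMOD n]) (m : ℤ) :
    swapRes n i j (swapRes n i j m) = m := by
  unfold swapRes
  by_cases hi : m % n = i % n
  · have hj : (m + (j - i)) % n = j % n := by
      have h := (show m ≡ i [ZMOD n] from hi).add_right (j - i)
      rwa [add_sub_cancel] at h
    have hi' : (m + (j - i)) % n ≠ i % n := fun h => hij (h.symm.trans hj)
    rw [if_pos hi, if_neg hi', if_pos hj]
    ring
  · by_cases hj : m % n = j % n
    · have hi' : (m - (j - i)) % n = i % n := by
        have h := (show m ≡ j [ZMOD n] from hj).sub_right (j - i)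
        rwa [sub_sub_cancel] at h
      rw [if_neg hi, if_pos hj, if_pos hi']
      ring
    · rw [if_neg hi, if_neg hj, if_neg hi, if_neg hj]

lemma swapRes_add (m : ℤ) : swapRes n i j (m + n) = swapRes n i j m + n := by
  simp only [swapRes, Int.add_emod_right]
  split_ifs <;> ring

lemma resolve_eq_comp (hper : ∀ m, f (m + n) = f m + n) :
    resolve n f i j = f ∘ swapRes n i j := by
  funext m
  have hshift : ∀ a b : ℤ, m ≡ a [ZMOD n] → f b + (m - a) = f (m + (b - a)) := fun a b h => by
    obtain ⟨c, hc⟩ := Int.modEq_iff_add_fac.1 h.symm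
    rw [hc, show a + n * c + (b - a) = b + c * n by ring, map_add_mul hper]
    ring
  simp only [resolve, swapRes, comp_apply]
  split_ifs with hi hj
  · exact hshift i j hi
  · rw [show m - (j - i) = m + (i - j) by ring]
    exact hshift j i hj
  · rfl

lemma resolve_add (hper : ∀ m, f (m + n) = f m + n) (m : ℤ) :
    resolve n f i j (m + n) = resolve n f i j m + n := by
  simp only [resolve_eq_comp hper, comp_apply, swapRes_add, hper]

lemma resolve_injective (hper : ∀ m, f (m + n) = f m + n) (hinj : Injective f)
    (hij : ¬ i ≡ j [ZMOD n]) : Injective (resolve n f i j) := by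
  rw [resolve_eq_comp hper]
  exact hinj.comp (LeftInverse.injective (swapRes_swapRes hij))

lemma isBoundedFn_resolve (hbdd : IsBoundedFn n f) (hij : i < j) (hfij : f j < f i) :
    IsBoundedFn n (resolve n f i j) := by
  intro m
  have := hbdd i
  have := hbdd j
  simp only [resolve]
  split_ifs
  · constructor <;> omega
  · constructor <;> omega
  · exact hbdd m

lemma not_modEq_of_inversion (hper : ∀ m, f (m + n) = f m + n) (hij : i < j)
    (hfij : f j < f i) : ¬ i ≡ j [ZMOD n] := by
  intro h
  obtain ⟨c, rfl⟩ := Int.modEq_iff_add_fac.1 h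
  rw [mul_comm, map_add_mul hper] at hfij
  nlinarith

end Resolve

section Relabel

variable {n B : ℕ} {g g₁ : ℤ → ℤ}

lemma exists_strictMono_range_eq (hB : 0 < B) {O : Finset ℤ} (hO : ∀ y ∈ O, 0 ≤ y ∧ y < n)
    (hcard : #O = B) : ∃ φ : ℤ → ℤ, StrictMono φ ∧ (∀ m, φ (m + B) = φ m + n) ∧
      Set.range φ = {m : ℤ | m % n ∈ O} := by
  have : NeZero B := ⟨hB.ne'⟩
  set E := O.orderEmbOfFin hcard
  set e := Int.divModEquiv B
  -- block `q` of `φ` enumerates the `q`-th translate of `O`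
  let φ : ℤ → ℤ := fun m => (e m).1 * n + E (e m).2
  have hφ : ∀ (q : ℤ) (t : Fin B), φ (q * B + t) = q * n + E t := fun q t => by
    have : q * B + t = e.symm (q, t) := by simp [e]
    simp only [φ, this, Equiv.apply_symm_apply]
  have hdecomp : ∀ m, ∃ (q : ℤ) (t : Fin B), m = q * B + t := fun m =>
    ⟨(e m).1, (e m).2, by simpa [e] using (e.symm_apply_apply m).symm⟩
  have hEO : ∀ t, 0 ≤ E t ∧ E t < n := fun t => hO _ (O.orderEmbOfFin_mem hcard t)
  refine ⟨φ, strictMono_int_of_lt_succ fun m => ?_, fun m => ?_, ?_⟩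
  · obtain ⟨q, t, rfl⟩ := hdecomp m
    rcases (show (t : ℕ) + 1 < B ∨ (t : ℕ) + 1 = B by omega) with h | h
    · rw [show q * B + t + 1 = q * B + ((⟨t + 1, h⟩ : Fin B) : ℕ) by push_cast; ring, hφ, hφ]
      have : E t < E ⟨t + 1, h⟩ := E.strictMono (Fin.mk_lt_mk.2 (by omega))
      linarith
    · have h' : ((t : ℕ) : ℤ) + 1 = B := by exact_mod_cast h
      rw [show q * B + t + 1 = (q + 1) * B + ((⟨0, hB⟩ : Fin B) : ℕ) by push_cast; linarith,
        hφ, hφ]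
      linarith [hEO t, hEO ⟨0, hB⟩]
  · obtain ⟨q, t, rfl⟩ := hdecomp m
    rw [show q * B + t + B = (q + 1) * B + t by ring, hφ, hφ]
    ring
  · ext x
    constructor
    · rintro ⟨m, rfl⟩
      obtain ⟨q, t, rfl⟩ := hdecomp m
      show φ (q * B + t) % n ∈ O
      rw [hφ, add_comm, Int.add_mul_emod_self_right,
        Int.emod_eq_of_lt (hEO t).1 (hEO t).2]
      exact O.orderEmbOfFin_mem hcard t
    · intro hx
      obtain ⟨t, ht⟩ : x % n ∈ Set.range E := by
        rw [Finset.range_orderEmbOfFin]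
        exact hx
      exact ⟨x / n * B + t, by rw [hφ, ht, Int.ediv_mul_add_emod]⟩

lemma exists_isRelabelOn (hB : 0 < B) {O : Finset ℤ} (hO : ∀ y ∈ O, 0 ≤ y ∧ y < n)
    (hcard : #O = B) (hg : ∀ x : ℤ, x % n ∈ O → g x % n ∈ O) :
    ∃ g₁, IsRelabelOn n g {m : ℤ | m % n ∈ O} B g₁ := by
  obtain ⟨φ, hmono, hper, hrange⟩ := exists_strictMono_range_eq hB hO hcard
  have : ∀ m, ∃ m', φ m' = g (φ m) := fun m => by
    rw [← Set.mem_range, hrange]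
    have hm : φ m ∈ {m : ℤ | m % n ∈ O} := hrange ▸ Set.mem_range_self m
    exact hg _ hm
  choose g₁ hg₁ using this
  exact ⟨g₁, φ, hmono, hper, hrange, fun m => (hg₁ m).symm⟩

lemma winding_eq_of_isRelabelOn (hB : 0 < B) (hper : ∀ m, g (m + n) = g m + n)
    (hinj : Injective g) (hbdd : IsBoundedFn n g) {S : Set ℤ} {x : ℤ} {K : ℕ} (hx : x ∈ S)
    (hret : g^[B] x = x + K * n) (horb : Set.InjOn (fun s => g^[s] x % n) (range B))
    (h : IsRelabelOn n g S B g₁) : winding B g₁ = K := by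
  obtain ⟨φ, hmono, hφper, rfl, hcomm⟩ := h
  obtain ⟨x₀, rfl⟩ := hx
  have hiter : ∀ r m, φ (g₁^[r] m) = g^[r] (φ m) :=
    fun r => Semiconj.iterate_right (fun m => (hcomm m).symm) r
  have hper₁ : ∀ m, g₁ (m + B) = g₁ m + B := fun m => hmono.injective <| by
    rw [← hcomm, hφper, hper, hcomm, hφper]
  have hinj₁ : Injective g₁ := fun a b hab => hmono.injective (hinj (by rw [hcomm, hcomm, hab]))
  have hbdd₁ : IsBoundedFn B g₁ := fun m =>
    ⟨hmono.le_iff_le.1 (by rw [← hcomm]; exact (hbdd _).1),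
      hmono.le_iff_le.1 (by rw [← hcomm, hφper]; exact (hbdd _).2)⟩
  have horb₁ : Set.InjOn (fun s => g₁^[s] x₀ % B) (range B) := fun s hs t ht hst => by
    have := map_modEq_of_modEq hφper (show g₁^[s] x₀ ≡ g₁^[t] x₀ [ZMOD B] from hst)
    rw [hiter, hiter] at this
    exact horb hs ht this
  have hφB : φ (x₀ + winding B g₁ * B) = φ (x₀ + K * B) := by
    rw [← iterate_eq_add_winding_mul hper₁ hinj₁ hbdd₁ horb₁, hiter, hret, map_add_mul hφper]
  have := hmono.injective hφB
  have hB' : (B : ℤ) ≠ 0 := by positivity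
  exact_mod_cast mul_right_cancel₀ hB' (add_left_cancel this)

end Relabel

section Crossing

variable {n k : ℕ} {u : ℤ → ℤ}

lemma exists_add_lt_of_slope (hn : 0 < n) (hu : ∀ r, u (r + n) = u r + k * n) {a b : ℤ}
    (hslope : a * n < k * b) : ∃ r, u (r - b) + a * n < u r := by
  by_contra! H
  have hiter : ∀ (m : ℕ) r, u r ≤ u (r - m * b) + m * (a * n) := by
    intro m
    induction m with
    | zero => simp
    | succ m ih =>
      intro r
      have := H (r - m * b)
      have := ih r
      rw [show r - ((m + 1 : ℕ) : ℤ) * b = r - m * b - b by push_cast; ring]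
      push_cast
      linarith
  have := hiter n 0
  rw [show (0 : ℤ) - n * b = 0 + (-b) * n by ring, map_add_mul hu] at this
  nlinarith

/-- The defect `u (r - b) + a n - u r` is `n`-periodic and negative somewhere, so from a point
where it is nonnegative it must turn negative later. -/
lemma exists_crossing (hn : 0 < n) (hu : ∀ r, u (r + n) = u r + k * n) {a b : ℤ}
    (hslope : a * n < k * b) {r₀ : ℤ} (h₀ : u r₀ ≤ u (r₀ - b) + a * n) :
    ∃ r, u r ≤ u (r - b) + a * n ∧ u (r + 1 - b) + a * n < u (r + 1) := by
  obtain ⟨r₁, hr₁⟩ := exists_add_lt_of_slope hn hu hslope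
  set r₂ := r₁ + |r₀ - r₁| * n
  have hr₂ : u (r₂ - b) + a * n < u r₂ := by
    rw [show r₂ - b = (r₁ - b) + |r₀ - r₁| * n by ring, map_add_mul hu, map_add_mul hu]
    linarith
  have hle : r₀ ≤ r₂ := by
    have : (1 : ℤ) ≤ n := by exact_mod_cast hn
    nlinarith [le_abs_self (r₀ - r₁), abs_nonneg (r₀ - r₁)]
  by_contra! H
  have key : ∀ r, r₀ ≤ r → u r ≤ u (r - b) + a * n := fun r hr => by
    induction r, hr using Int.leInduction with
    | base => exact h₀
    | succ r _ ih => exact H r ih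
  linarith [key r₂ hle]

end Crossing

end AffinePerm

open AffinePerm

lemma bigPt_add_mul (n k : ℕ) (f : ℤ → ℤ) (r t : ℤ) :
    bigPt n k f (r + t * n) = bigPt n k f r + t * (k * n) := by
  rcases Nat.eq_zero_or_pos n with rfl | hn
  · simp
  have hn' : (n : ℤ) ≠ 0 := by positivity
  simp only [bigPt, Int.add_mul_emod_self_right, Int.add_mul_ediv_right _ _ hn']
  ring

lemma bigPt_natCast_of_lt {n k : ℕ} (f : ℤ → ℤ) {s : ℕ} (hs : s < n) :
    bigPt n k f s = f^[s] 0 := by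
  have h0 : (0 : ℤ) ≤ s := by positivity
  have hsn : (s : ℤ) < n := by exact_mod_cast hs
  simp [bigPt, Int.emod_eq_of_lt h0 hsn, Int.ediv_eq_zero_of_lt h0 hsn]

lemma bigPt_emod (n k : ℕ) (f : ℤ → ℤ) (r : ℤ) :
    bigPt n k f r % n = f^[(r % n).toNat] 0 % n := by
  rw [bigPt, show r / n * (k * n) = r / n * k * (n : ℤ) by ring, Int.add_mul_emod_self_right]

/-- The translate `P_∞ + α` lies strictly below the big path `P_∞` at every integer abscissa
(`α = (vertical, horizontal)` as in `InFtPlus`). -/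
def TranslateBelow (n k : ℕ) (f : ℤ → ℤ) (α : ℤ × ℤ) : Prop :=
  ∀ r, bigPt n k f (r - α.2) + α.1 * n < bigPt n k f r

lemma TranslateBelow.add {n k : ℕ} {f : ℤ → ℤ} {α β : ℤ × ℤ} (hα : TranslateBelow n k f α)
    (hβ : TranslateBelow n k f β) : TranslateBelow n k f (α.1 + β.1, α.2 + β.2) := fun r => by
  have h := hα (r - β.2)
  rw [sub_sub, add_comm β.2] at h
  show bigPt n k f (r - (α.2 + β.2)) + (α.1 + β.1) * n < bigPt n k f r
  linarith [hβ r]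

namespace IsTheta

variable {k n : ℕ} {f : ℤ → ℤ}

lemma periodic (hf : IsTheta k n f) (m : ℤ) : f (m + n) = f m + n := hf.1.1.2 m

lemma injective (hf : IsTheta k n f) : Injective f := hf.1.1.1.injective

lemma bounded (hf : IsTheta k n f) : IsBoundedFn n f := hf.1.2

lemma pos (hf : IsTheta k n f) : 0 < n := by
  obtain ⟨r, hr, -⟩ := hf.2.1 0
  omega

lemma injOn_iterate_zero_emod (hf : IsTheta k n f) :
    Set.InjOn (fun s => f^[s] 0 % n) (range n) := by
  refine injOn_of_card_image_eq (le_antisymm card_image_le ?_)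
  calc #(range n) = #(Ico (0 : ℤ) n) := by simp
    _ ≤ _ := card_le_card fun m hm => by
      obtain ⟨r, hr, hrm⟩ := hf.2.1 m
      rw [mem_Ico] at hm
      exact mem_image.2 ⟨r, mem_range.2 hr, hrm.trans (Int.emod_eq_of_lt hm.1 hm.2)⟩

lemma iterate_n_zero (hf : IsTheta k n f) : f^[n] 0 = k * n := by
  simpa [hf.2.2] using
    iterate_eq_add_winding_mul hf.periodic hf.injective hf.bounded hf.injOn_iterate_zero_emod

lemma bigPt_succ (hf : IsTheta k n f) (r : ℤ) :
    bigPt n k f (r + 1) = f (bigPt n k f r) := by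
  have hn : (0 : ℤ) < n := by exact_mod_cast hf.pos
  obtain ⟨s, q, hs, rfl⟩ : ∃ (s : ℕ) (q : ℤ), s < n ∧ r = s + q * n := by
    have h0 := Int.emod_nonneg r hn.ne'
    have := Int.emod_lt_of_pos r hn
    exact ⟨(r % n).toNat, r / n, by omega, by rw [Int.toNat_of_nonneg h0,
      Int.emod_add_ediv_mul]⟩
  rw [add_right_comm, bigPt_add_mul, bigPt_add_mul, bigPt_natCast_of_lt f hs,
    show q * (k * n) = q * k * (n : ℤ) by ring, map_add_mul hf.periodic, ← iterate_succ_apply' f]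
  rcases (show s + 1 < n ∨ s + 1 = n by omega) with h | h
  · rw [← bigPt_natCast_of_lt f h]
    push_cast
    ring
  · rw [show ((s : ℤ) + 1) = 0 + 1 * n by omega, bigPt_add_mul, Nat.succ_eq_add_one, h,
      hf.iterate_n_zero]
    simp [bigPt]

lemma bigPt_add_nat (hf : IsTheta k n f) (r : ℤ) (s : ℕ) :
    bigPt n k f (r + s) = f^[s] (bigPt n k f r) := by
  induction s with
  | zero => simp
  | succ s ih => rw [Nat.cast_succ, ← add_assoc, hf.bigPt_succ, ih, iterate_succ_apply']

lemma bigPt_modEq_bigPt_iff (hf : IsTheta k n f) {r r' : ℤ} :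
    bigPt n k f r ≡ bigPt n k f r' [ZMOD n] ↔ r ≡ r' [ZMOD n] := by
  have hn : (0 : ℤ) < n := by exact_mod_cast hf.pos
  have hr := Int.emod_nonneg r hn.ne'
  have hr' := Int.emod_nonneg r' hn.ne'
  have hrn := Int.emod_lt_of_pos r hn
  have hrn' := Int.emod_lt_of_pos r' hn
  unfold Int.ModEq
  rw [bigPt_emod, bigPt_emod]
  refine ⟨fun h => ?_, fun h => by rw [h]⟩
  have := hf.injOn_iterate_zero_emod (mem_range.2 (by omega)) (mem_range.2 (by omega)) h
  omega

lemma exists_bigPt_modEq (hf : IsTheta k n f) (x : ℤ) : ∃ ρ, bigPt n k f ρ ≡ x [ZMOD n] := by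
  obtain ⟨r, hr, hrx⟩ := hf.2.1 x
  exact ⟨r, by rw [bigPt_natCast_of_lt f hr]; exact hrx⟩

lemma iterate_modEq_bigPt (hf : IsTheta k n f) {x ρ : ℤ} (hρ : bigPt n k f ρ ≡ x [ZMOD n])
    (s : ℕ) : f^[s] x ≡ bigPt n k f (ρ + s) [ZMOD n] := by
  rw [hf.bigPt_add_nat]
  exact iterate_modEq hf.periodic hρ.symm s

lemma eq_of_iterate_modEq (hf : IsTheta k n f) {x : ℤ} {s t : ℕ} (hs : s < n) (ht : t < n)
    (h : f^[s] x ≡ f^[t] x [ZMOD n]) : s = t := by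
  obtain ⟨ρ, hρ⟩ := hf.exists_bigPt_modEq x
  have hst := hf.bigPt_modEq_bigPt_iff.1
    (((hf.iterate_modEq_bigPt hρ s).symm.trans h).trans (hf.iterate_modEq_bigPt hρ t))
  have := eq_of_modEq_of_abs_sub_lt (Int.ModEq.add_left_cancel' ρ hst)
    (abs_sub_lt_iff.2 ⟨by omega, by omega⟩)
  exact_mod_cast this

lemma exists_iterate_modEq (hf : IsTheta k n f) (x y : ℤ) :
    ∃ s < n, f^[s] x ≡ y [ZMOD n] := by
  have hn : (0 : ℤ) < n := by exact_mod_cast hf.pos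
  obtain ⟨ρ, hρ⟩ := hf.exists_bigPt_modEq x
  obtain ⟨ρ', hρ'⟩ := hf.exists_bigPt_modEq y
  have h0 := Int.emod_nonneg (ρ' - ρ) hn.ne'
  have h1 := Int.emod_lt_of_pos (ρ' - ρ) hn
  refine ⟨((ρ' - ρ) % n).toNat, by omega, (hf.iterate_modEq_bigPt hρ _).trans
    ((hf.bigPt_modEq_bigPt_iff.2 ?_).trans hρ')⟩
  rw [Int.toNat_of_nonneg h0]
  calc ρ + (ρ' - ρ) % n ≡ ρ + (ρ' - ρ) [ZMOD n] := Int.ModEq.add_left _ (Int.mod_modEq _ _)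
    _ = ρ' := by ring

variable {i j : ℤ}

lemma iterate_resolve (hf : IsTheta k n f) {B : ℕ} (hBn : B < n)
    (hret : f^[B] j ≡ i [ZMOD n]) {s : ℕ} (hs : 1 ≤ s) (hsB : s ≤ B) :
    (resolve n f i j)^[s] i = f^[s] j := by
  induction s, hs using Nat.le_induction with
  | base => simp [resolve]
  | succ s hs ih =>
    rw [iterate_succ_apply', ih (by omega), iterate_succ_apply']
    have hi : f^[s] j % n ≠ i % n := fun h => by
      have := hf.eq_of_iterate_modEq (by omega) hBn ((show f^[s] j ≡ i [ZMOD n] from h).trans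
        hret.symm)
      omega
    have hj : f^[s] j % n ≠ j % n := fun h => by
      have := hf.eq_of_iterate_modEq (t := 0) (by omega) hf.pos h
      omega
    simp only [resolve, if_neg hi, if_neg hj]

/-- After resolving, the cycle through `i` follows the orbit of `j` until it returns to
`i + K n`. -/
theorem resParamsAt_resolve (hf : IsTheta k n f) (hij : i < j) (hfij : f j < f i) {B K : ℕ}
    (hB : 0 < B) (hBn : B < n) (hK : f^[B] j = i + K * n) :
    resParamsAt n (resolve n f i j) i = (K, B) := by
  set g := resolve n f i j
  have hper : ∀ m, g (m + n) = g m + n := resolve_add hf.periodic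
  have hinj : Injective g :=
    resolve_injective hf.periodic hf.injective (not_modEq_of_inversion hf.periodic hij hfij)
  have hbdd : IsBoundedFn n g := isBoundedFn_resolve hf.bounded hij hfij
  have hfret : f^[B] j ≡ i [ZMOD n] := by
    rw [hK]
    exact Int.add_mul_emod_self_right _ _ _
  have hret : g^[B] i = i + K * n := (hf.iterate_resolve hBn hfret hB le_rfl).trans hK
  have hgret : g^[B] i ≡ i [ZMOD n] := by
    rw [hret]
    exact Int.add_mul_emod_self_right _ _ _
  have hmin : ∀ s, 0 < s → s < B → ¬ g^[s] i ≡ i [ZMOD n] := fun s hs hsB h => by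
    rw [hf.iterate_resolve hBn hfret hs hsB.le] at h
    have := hf.eq_of_iterate_modEq (by omega) hBn (h.trans hfret.symm)
    omega
  have horb := injOn_iterate_emod hper hinj hmin
  have hcard : #(orbitF n g i) = B := by
    rw [orbitF_eq_image_range hper hB hBn.le hgret, card_image_of_injOn horb, card_range]
  have hn : (0 : ℤ) < n := by exact_mod_cast hf.pos
  have hO : ∀ y ∈ orbitF n g i, 0 ≤ y ∧ y < n := fun y hy => by
    obtain ⟨r, -, rfl⟩ := mem_image.1 hy
    exact ⟨Int.emod_nonneg _ hn.ne', Int.emod_lt_of_pos _ hn⟩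
  have hi : i % n ∈ orbitF n g i := mem_image.2 ⟨0, mem_range.2 hf.pos, rfl⟩
  have hwind : ∀ g₁, IsRelabelOn n g {m : ℤ | m % n ∈ orbitF n g i} B g₁ → winding B g₁ = K :=
    fun g₁ => winding_eq_of_isRelabelOn hB hper hinj hbdd hi hret horb
  obtain ⟨g₁, hg₁⟩ := exists_isRelabelOn hB hO hcard
    fun x hx => map_emod_mem_orbitF hper hB hBn.le hgret hx
  have hset : {k₁ : ℕ | ∃ g₁, IsRelabelOn n g {m : ℤ | m % n ∈ orbitF n g i} B g₁ ∧
      winding B g₁ = k₁} = {K} :=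
    Set.eq_singleton_iff_unique_mem.2
      ⟨⟨g₁, hg₁, hwind g₁ hg₁⟩, fun _ ⟨g₁', h', hk⟩ => hk ▸ hwind g₁' h'⟩
  rw [resParamsAt, hcard, hset, csInf_singleton]

lemma exists_return_of_inversion (hf : IsTheta k n f) (hij : i < j) (hfij : f j < f i) :
    ∃ B K : ℕ, 0 < B ∧ B < n ∧ f^[B] j = i + K * n := by
  obtain ⟨B, hBn, hB⟩ := hf.exists_iterate_modEq j i
  obtain ⟨c, hc⟩ := Int.modEq_iff_add_fac.1 hB.symm
  have hB0 : 0 < B := by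
    rcases Nat.eq_zero_or_pos B with rfl | h
    · exact absurd hB.symm (not_modEq_of_inversion hf.periodic hij hfij)
    · exact h
  have : j ≤ f^[B] j := id_le_iterate_of_id_le (fun x => (hf.bounded x).1) B j
  have hc0 : 0 ≤ c := by nlinarith
  lift c to ℕ using hc0
  exact ⟨B, c, hB0, hBn, by rw [hc]; ring⟩

lemma mem_invMultiset_iff (hf : IsTheta k n f) {K B : ℕ} :
    (K, B) ∈ invMultiset n f ↔
      ∃ i j : ℤ, i < j ∧ f j < f i ∧ 0 < B ∧ B < n ∧ f^[B] j = i + K * n := by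
  constructor
  · intro h
    obtain ⟨⟨i, j⟩, hmem, hp⟩ := Multiset.mem_map.1 h
    obtain ⟨-, hij, hfij⟩ := mem_filter.1 hmem
    obtain ⟨B', K', hB', hBn', hK'⟩ := hf.exists_return_of_inversion hij hfij
    rw [hf.resParamsAt_resolve hij hfij hB' hBn' hK', Prod.mk.injEq] at hp
    obtain ⟨rfl, rfl⟩ := hp
    exact ⟨i, j, hij, hfij, hB', hBn', hK'⟩
  · rintro ⟨i, j, hij, hfij, hB, hBn, hK⟩
    -- translate by `c n` so that `i ∈ [1, n]`; then `j < i + n` since `j ≤ f j < f i ≤ i + n`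
    have hn : (0 : ℤ) < n := by exact_mod_cast hf.pos
    have := Int.emod_nonneg (i - 1) hn.ne'
    have := Int.emod_lt_of_pos (i - 1) hn
    have := Int.emod_add_ediv_mul (i - 1) n
    have := (hf.bounded j).1
    have := (hf.bounded i).2
    set c := (i - 1) / n
    have hshift : ∀ m, f (m + -c * n) = f m + -c * n := fun m => map_add_mul hf.periodic m _
    refine Multiset.mem_map.2 ⟨(i + -c * n, j + -c * n), ?_, ?_⟩
    · change _ ∈ inversions n f
      simp only [inversions, mem_filter, mem_product, mem_Icc, hshift]
      refine ⟨⟨⟨?_, ?_⟩, ?_, ?_⟩, ?_, ?_⟩ <;> linarith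
    · refine hf.resParamsAt_resolve (by linarith) (by rw [hshift, hshift]; linarith) hB hBn ?_
      rw [iterate_add_mul hf.periodic, hK]
      ring

lemma not_inFtPlus_of_translateBelow (hf : IsTheta k n f) {γ : ℤ × ℤ}
    (h : TranslateBelow n k f γ) : ¬ InFtPlus k n f γ := by
  rintro ⟨t, h0 | ⟨⟨K, B⟩, hp, hpe⟩⟩
  · simp only [Prod.mk.injEq] at h0
    have hγ : γ.1 * n = t * (k * n) := by rw [show γ.1 = t * k by linarith]; ring
    have := h 0
    rw [show (0 : ℤ) - γ.2 = 0 + (-t) * n by linarith, bigPt_add_mul] at this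
    linarith
  · obtain ⟨i, j, hij, -, -, -, hK⟩ := hf.mem_invMultiset_iff.1 hp
    simp only [Prod.mk.injEq] at hpe
    have hγ : γ.1 * n = K * n + t * (k * n) := by rw [show γ.1 = K + t * k by linarith]; ring
    obtain ⟨ρ, hρ⟩ := hf.exists_bigPt_modEq j
    obtain ⟨c, hc⟩ := Int.modEq_iff_add_fac.1 hρ
    have hρB : bigPt n k f (ρ + B) + c * n = i + K * n := by
      rw [hf.bigPt_add_nat, ← iterate_add_mul hf.periodic, ← hK, hc, mul_comm]
    have := h (ρ + B + t * n)
    rw [show ρ + B + t * n - γ.2 = ρ by linarith, bigPt_add_mul] at this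
    linarith

lemma mem_invMultiset_of_crossing (hf : IsTheta k n f) {a : ℤ} {b : ℕ} (hbn : b < n)
    (hslope : a * n < k * b) {r : ℤ} (hr : bigPt n k f r ≤ bigPt n k f (r - b) + a * n)
    (hr' : bigPt n k f (r + 1 - b) + a * n < bigPt n k f (r + 1)) :
    ∃ K : ℕ, a = K ∧ (K, b) ∈ invMultiset n f := by
  have hb : 0 < b := by
    rcases Nat.eq_zero_or_pos b with rfl | h
    · simp only [Nat.cast_zero, mul_zero, sub_zero] at hslope hr
      linarith
    · exact h
  set i := bigPt n k f r
  set j := bigPt n k f (r - b) + a * n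
  have hfij : f j < f i := by
    rw [map_add_mul hf.periodic, ← hf.bigPt_succ, ← hf.bigPt_succ, sub_add_eq_add_sub]
    exact hr'
  have hij : i < j := lt_of_le_of_ne hr fun hij => (hij ▸ hfij).false
  have hret : f^[b] j = i + a * n := by
    rw [iterate_add_mul hf.periodic, ← hf.bigPt_add_nat, sub_add_cancel]
  have : j ≤ f^[b] j := id_le_iterate_of_id_le (fun x => (hf.bounded x).1) b j
  lift a to ℕ using by nlinarith [hf.pos]
  exact ⟨a, rfl, hf.mem_invMultiset_iff.2 ⟨i, j, hij, hfij, hb, hbn, hret⟩⟩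

lemma translateBelow_of_not_inFtPlus (hf : IsTheta k n f) {α : ℤ × ℤ}
    (hslope : α.1 * n < k * α.2) (h : ¬ InFtPlus k n f α) : TranslateBelow n k f α := by
  by_contra! hα
  simp only [TranslateBelow, not_forall, not_lt] at hα
  obtain ⟨r₀, hr₀⟩ := hα
  obtain ⟨a, b⟩ := α
  have hn : (0 : ℤ) < n := by exact_mod_cast hf.pos
  -- reduce to `0 ≤ b < n` by a translation by a multiple of `δ = (k, n)`
  obtain ⟨b₀, t, hb₀n, rfl⟩ : ∃ (b₀ : ℕ) (t : ℤ), b₀ < n ∧ b = b₀ + t * n := by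
    have h0 := Int.emod_nonneg b hn.ne'
    have := Int.emod_lt_of_pos b hn
    exact ⟨(b % n).toNat, b / n, by omega, by rw [Int.toNat_of_nonneg h0, Int.emod_add_ediv_mul]⟩
  obtain ⟨a₀, rfl⟩ : ∃ a₀, a = a₀ + t * k := ⟨a - t * k, by ring⟩
  have hshift : ∀ r, bigPt n k f (r - (b₀ + t * n)) + (a₀ + t * k) * n =
      bigPt n k f (r - b₀) + a₀ * n := fun r => by
    rw [show r - (b₀ + t * n) = r - b₀ + (-t) * n by ring, bigPt_add_mul]
    ring
  have hslope₀ : a₀ * n < k * b₀ := by simp only at hslope; linarith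
  have hu : ∀ r, bigPt n k f (r + n) = bigPt n k f r + k * n := fun r => by
    simpa using bigPt_add_mul n k f r 1
  obtain ⟨r, hr, hr'⟩ := exists_crossing hf.pos hu hslope₀ (r₀ := r₀) (by rw [← hshift]; exact hr₀)
  obtain ⟨K, rfl, hK⟩ := hf.mem_invMultiset_of_crossing hb₀n hslope₀ hr hr'
  exact h ⟨t, Or.inr ⟨(K, b₀), hK, by simp⟩⟩

end IsTheta

/-- For `f ∈ Θ_{k,n}`, `δ = (k,n)` and `δ^⊥ = (1, -k/n)`: if
`⟨δ^⊥,α⟩ < 0` (i.e. `α₁·n < k·α₂`), `⟨δ^⊥,β⟩ < 0`, and neither `α` nor `β` lies in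
`F̃'(f) + ℤδ`, then `α + β ∉ F̃'(f) + ℤδ`. -/
theorem positroid_stmt11 (k n : ℕ) (f : ℤ → ℤ) (hf : IsTheta k n f) (α β : ℤ × ℤ)
    (hα : α.1 * (n : ℤ) < (k : ℤ) * α.2) (hβ : β.1 * (n : ℤ) < (k : ℤ) * β.2)
    (hα' : ¬ InFtPlus k n f α) (hβ' : ¬ InFtPlus k n f β) :
    ¬ InFtPlus k n f (α.1 + β.1, α.2 + β.2) :=
  hf.not_inFtPlus_of_translateBelow
    ((hf.translateBelow_of_not_inFtPlus hα hα').add (hf.translateBelow_of_not_inFtPlus hβ hβ'))
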